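/- arXiv:2103.15051 — 2 statements merged into one kernel-verified Lean document; each statement's English description precedes it below -/
import Mathlib

section
/- Let p, q, r, s be real numbers with r ≠ s, rs = p, and rs(r+s) = q. If x is a real number satisfying (s/(s-r))·(x-r)³ + (r/(r-s))·(x-s)³ = 0, then x is a root of the reduced cubic x³ - 3px + q, and conversely every root of x³ - 3px + q satisfies (s/(s-r))·(x-r)³ + (r/(r-s))·(x-s)³ = 0. -/
theorem sylvester_root_equiv (p q r s : ℝ) (hrs : r ≠ s)
    (hp : r * s = p) (hq : r * s * (r + s) = q) (x : ℝ) :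
    (s/(s-r))*(x-r)^3 + (r/(r-s))*(x-s)^3 = 0 ↔ x^3 - 3*p*x + q = 0 := by
  have h : s - r ≠ 0 := sub_ne_zero.mpr (Ne.symm hrs)
  have h2 : r - s ≠ 0 := sub_ne_zero.mpr hrs
  have key : (s/(s-r))*(x-r)^3 + (r/(r-s))*(x-s)^3 = x^3 - 3*p*x + q := by
    subst hp hq
    field_simp
    ring
  rw [key]
end

section
/- Let r and s be complex numbers with r ≠ s and r·s ≠ 0, and set p = r·s, q = r·s·(r+s). If x is a complex number with x ≠ s and ((x-r)/(x-s))³ = r/s, then x³ - 3px + q = 0. -/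
theorem cube_root_solves_cubic (r s : ℂ) (hrs : r ≠ s) (hrs0 : r * s ≠ 0)
    (p q : ℂ) (hp : p = r * s) (hq : q = r * s * (r + s))
    (x : ℂ) (hx : x ≠ s) (h : ((x - r)/(x - s))^3 = r/s) :
    x^3 - 3*p*x + q = 0 := by
  have hs : s ≠ 0 := fun h0 => hrs0 (by simp [h0])
  have hxs : x - s ≠ 0 := sub_ne_zero.mpr hx
  have hsr : s - r ≠ 0 := sub_ne_zero.mpr (Ne.symm hrs)
  subst hp hq
  field_simp at h
  exact mul_left_cancel₀ hsr (by linear_combination h)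
end
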